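/- arXiv:2307.01495 — 4 statements merged into one kernel-verified Lean document; each statement's English description precedes it below -/
import Mathlib

section
/- Let X be a set, P a finite partition of X, and let α, β, α′, β′ be probability measures on X (assigning positive mass to each block of P). Let C = max over blocks A of P of α(A)/β(A). Then the difference of relative entropies satisfies H_{α∥β}(P) − H_{α′∥β′}(P) ≤ log( max_{A∈P} β′(A)/β(A) ) + 2·C^{1/2} · max_{A∈P} |1 − α′(A)/α(A)|. -/
open Finset

/-- a bound on the difference of relative entropies over a finite
partition (Lemma on KL-difference). Blocks of the partition are indexed by `ι`. -/
theorem stmt0 {ι : Type*} [Fintype ι] [Nonempty ι]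
    (α β α' β' : ι → ℝ)
    (hα : ∀ i, 0 < α i) (hβ : ∀ i, 0 < β i)
    (hα' : ∀ i, 0 < α' i) (hβ' : ∀ i, 0 < β' i)
    (hαs : ∑ i, α i = 1) (hβs : ∑ i, β i = 1)
    (hα's : ∑ i, α' i = 1) (hβ's : ∑ i, β' i = 1) :
    (∑ i, α i * Real.log (α i / β i)) - (∑ i, α' i * Real.log (α' i / β' i)) ≤
      Real.log (univ.sup' univ_nonempty (fun i => β' i / β i)) +
        2 * Real.sqrt (univ.sup' univ_nonempty (fun i => α i / β i)) *
          univ.sup' univ_nonempty (fun i => |1 - α' i / α i|) := by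
  set C := univ.sup' univ_nonempty (fun i => α i / β i) with hCdef
  set M := univ.sup' univ_nonempty (fun i => β' i / β i) with hMdef
  set D := univ.sup' univ_nonempty (fun i => |1 - α' i / α i|) with hDdef
  have hCge : ∀ i : ι, α i / β i ≤ C := fun i => le_sup' (fun i => α i / β i) (mem_univ i)
  have hMge : ∀ i : ι, β' i / β i ≤ M := fun i => le_sup' (fun i => β' i / β i) (mem_univ i)
  have hDge : ∀ i : ι, |1 - α' i / α i| ≤ D := fun i => le_sup' (fun i => |1 - α' i / α i|) (mem_univ i)
  have hC1 : (1:ℝ) ≤ C := by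
    by_contra h
    push_neg at h
    have hlt : ∀ i ∈ (univ : Finset ι), α i < β i := by
      intro i _
      have h1 : α i / β i < 1 := lt_of_le_of_lt (hCge i) h
      have := mul_lt_mul_of_pos_right h1 (hβ i)
      rwa [div_mul_cancel₀ _ (hβ i).ne', one_mul] at this
    have := Finset.sum_lt_sum_of_nonempty univ_nonempty hlt
    rw [hαs, hβs] at this
    exact lt_irrefl 1 this
  have hCpos : (0:ℝ) < C := lt_of_lt_of_le one_pos hC1
  have hlogC : (0:ℝ) ≤ Real.log C := Real.log_nonneg hC1
  have hMpos : (0:ℝ) < M :=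
    lt_of_lt_of_le (div_pos (hβ' (Classical.arbitrary ι)) (hβ _)) (hMge _)
  have hDnn : (0:ℝ) ≤ D :=
    le_trans (abs_nonneg _) (hDge (Classical.arbitrary ι))
  -- log C + 1 ≤ 2 √C
  have hsqrtC : Real.log C + 1 ≤ 2 * Real.sqrt C := by
    have h1 : Real.log (Real.sqrt C) = Real.log C / 2 := Real.log_sqrt hCpos.le
    have h2 : Real.log (Real.sqrt C) ≤ Real.sqrt C - 1 :=
      Real.log_le_sub_one_of_pos (Real.sqrt_pos.mpr hCpos)
    nlinarith
  -- pointwise decomposition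
  have key : ∀ i, α i * Real.log (α i / β i) - α' i * Real.log (α' i / β' i) =
      (α i - α' i) * Real.log (α i / β i) - α' i * Real.log (α' i / α i)
        + α' i * Real.log (β' i / β i) := by
    intro i
    rw [Real.log_div (hα i).ne' (hβ i).ne', Real.log_div (hα' i).ne' (hβ' i).ne',
      Real.log_div (hα' i).ne' (hα i).ne', Real.log_div (hβ' i).ne' (hβ i).ne']
    ring
  have hsplit : (∑ i, α i * Real.log (α i / β i)) - (∑ i, α' i * Real.log (α' i / β' i)) =
      (∑ i, (α i - α' i) * Real.log (α i / β i))
        - (∑ i, α' i * Real.log (α' i / α i))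
        + (∑ i, α' i * Real.log (β' i / β i)) := by
    rw [← Finset.sum_sub_distrib, ← Finset.sum_sub_distrib, ← Finset.sum_add_distrib]
    exact Finset.sum_congr rfl fun i _ => key i
  -- Gibbs term nonneg
  have hGibbs : (0:ℝ) ≤ ∑ i, α' i * Real.log (α' i / α i) := by
    have hpt : ∀ i ∈ (univ : Finset ι), α' i - α i ≤ α' i * Real.log (α' i / α i) := by
      intro i _
      have h1 : Real.log (α i / α' i) ≤ α i / α' i - 1 :=
        Real.log_le_sub_one_of_pos (div_pos (hα i) (hα' i))
      have h2 : Real.log (α i / α' i) = - Real.log (α' i / α i) := by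
        rw [← Real.log_inv]
        congr 1
        rw [inv_div]
      rw [h2] at h1
      have h3 := mul_le_mul_of_nonneg_left h1 (hα' i).le
      have h4 : α' i * (α i / α' i - 1) = α i - α' i := by
        rw [mul_sub, mul_one, mul_div_cancel₀ _ (hα' i).ne']
      nlinarith
    have := Finset.sum_le_sum hpt
    rw [Finset.sum_sub_distrib, hα's, hαs] at this
    linarith
  -- third term bound
  have hT3 : (∑ i, α' i * Real.log (β' i / β i)) ≤ Real.log M := by
    have hpt : ∀ i ∈ (univ : Finset ι),
        α' i * Real.log (β' i / β i) ≤ α' i * Real.log M := by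
      intro i _
      exact mul_le_mul_of_nonneg_left
        (Real.log_le_log (div_pos (hβ' i) (hβ i)) (hMge i)) (hα' i).le
    have := Finset.sum_le_sum hpt
    rwa [← Finset.sum_mul, hα's, one_mul] at this
  -- weighted log bound: α i * |log (α i / β i)| ≤ α i * log C + β i
  have hlogbd : ∀ i, α i * |Real.log (α i / β i)| ≤ α i * Real.log C + β i := by
    intro i
    have hr : (0:ℝ) < α i / β i := div_pos (hα i) (hβ i)
    rcases le_or_gt 1 (α i / β i) with h | h
    · have h1 : |Real.log (α i / β i)| = Real.log (α i / β i) :=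
        abs_of_nonneg (Real.log_nonneg h)
      have h2 : Real.log (α i / β i) ≤ Real.log C := Real.log_le_log hr (hCge i)
      rw [h1]
      nlinarith [(hα i), (hβ i).le, mul_le_mul_of_nonneg_left h2 (hα i).le]
    · have h1 : |Real.log (α i / β i) * (α i / β i)| < 1 :=
        Real.abs_log_mul_self_lt _ hr h.le
      have h2 : α i * |Real.log (α i / β i)| =
          β i * |Real.log (α i / β i) * (α i / β i)| := by
        rw [abs_mul, abs_of_pos hr, mul_comm |Real.log (α i / β i)| (α i / β i),
          ← mul_assoc, mul_div_cancel₀ _ (hβ i).ne']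
      rw [h2]
      have h3 : β i * |Real.log (α i / β i) * (α i / β i)| ≤ β i * 1 :=
        mul_le_mul_of_nonneg_left h1.le (hβ i).le
      nlinarith [mul_nonneg (hα i).le hlogC]
  -- first term bound
  have hT1 : (∑ i, (α i - α' i) * Real.log (α i / β i)) ≤ D * (Real.log C + 1) := by
    have hpt : ∀ i ∈ (univ : Finset ι),
        (α i - α' i) * Real.log (α i / β i) ≤ D * (α i * Real.log C + β i) := by
      intro i _
      have e1 : α i - α' i = α i * (1 - α' i / α i) := by
        rw [mul_sub, mul_one, mul_div_cancel₀ _ (hα i).ne']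
      have b1 : (α i - α' i) * Real.log (α i / β i) ≤
          |α i - α' i| * |Real.log (α i / β i)| := by
        rw [← abs_mul]; exact le_abs_self _
      have b2 : |α i - α' i| = α i * |1 - α' i / α i| := by
        rw [e1, abs_mul, abs_of_pos (hα i)]
      have b3 : α i * |1 - α' i / α i| * |Real.log (α i / β i)| ≤
          D * (α i * |Real.log (α i / β i)|) := by
        have := mul_le_mul_of_nonneg_left (hDge i) (hα i).le
        calc α i * |1 - α' i / α i| * |Real.log (α i / β i)|
            ≤ α i * D * |Real.log (α i / β i)| :=
              mul_le_mul_of_nonneg_right this (abs_nonneg _)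
          _ = D * (α i * |Real.log (α i / β i)|) := by ring
      have b4 : D * (α i * |Real.log (α i / β i)|) ≤ D * (α i * Real.log C + β i) :=
        mul_le_mul_of_nonneg_left (hlogbd i) hDnn
      calc (α i - α' i) * Real.log (α i / β i)
          ≤ |α i - α' i| * |Real.log (α i / β i)| := b1
        _ = α i * |1 - α' i / α i| * |Real.log (α i / β i)| := by rw [b2]
        _ ≤ D * (α i * |Real.log (α i / β i)|) := b3
        _ ≤ D * (α i * Real.log C + β i) := b4
    have := Finset.sum_le_sum hpt
    calc (∑ i, (α i - α' i) * Real.log (α i / β i))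
        ≤ ∑ i, D * (α i * Real.log C + β i) := this
      _ = D * (Real.log C + 1) := by
          rw [← Finset.mul_sum, Finset.sum_add_distrib, ← Finset.sum_mul, hαs, hβs, one_mul]
  have hfin : D * (Real.log C + 1) ≤ 2 * Real.sqrt C * D := by
    have := mul_le_mul_of_nonneg_left hsqrtC hDnn
    nlinarith
  rw [hsplit]
  linarith
end

section
/- Let α and β be probability measures on a finite set S with α(A)/β(A) ≤ M for all A with β(A) > 0. Then Σ_{A : α(A) ≥ β(A)} α(A) log(α(A)/β(A)) ≤ √M · d_TV(α, β), where d_TV denotes the total variation distance. -/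
lemma two_log_le_aux (s : ℝ) (hs : 1 ≤ s) : 2 * Real.log s ≤ s - 1 / s := by
  have key : MonotoneOn (fun t : ℝ => t - 1 / t - 2 * Real.log t) (Set.Ici 1) := by
    have hd : ∀ x : ℝ, 0 < x →
        HasDerivAt (fun t : ℝ => t - 1 / t - 2 * Real.log t)
          (1 - (-(1 / x ^ 2)) - 2 * x⁻¹) x := by
      intro x hx
      have h1 : HasDerivAt (fun t : ℝ => 1 / t) (-(1 / x ^ 2)) x := by
        simpa [one_div] using (hasDerivAt_inv hx.ne')
      have h2 : HasDerivAt (fun t : ℝ => 2 * Real.log t) (2 * x⁻¹) x :=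
        (Real.hasDerivAt_log hx.ne').const_mul 2
      exact ((hasDerivAt_id x).sub h1).sub h2
    apply monotoneOn_of_deriv_nonneg (convex_Ici 1)
    · apply ContinuousOn.sub (ContinuousOn.sub continuousOn_id ?_) ?_
      · exact ContinuousOn.div continuousOn_const continuousOn_id
          (fun x hx => by simp at hx; positivity)
      · exact ContinuousOn.mul continuousOn_const
          (Real.continuousOn_log.mono (fun x hx => by simp at hx ⊢; positivity))
    · intro x hx
      rw [interior_Ici] at hx
      exact ((hd x (lt_trans one_pos hx)).differentiableAt).differentiableWithinAt
    · intro x hx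
      rw [interior_Ici] at hx
      have hx0 : 0 < x := lt_trans one_pos hx
      rw [(hd x hx0).deriv]
      have h1 : 1 - (-(1 / x ^ 2)) - 2 * x⁻¹ = (1 - x⁻¹) ^ 2 := by
        field_simp
        ring
      rw [h1]
      positivity
  have h0 := key (Set.self_mem_Ici) (Set.mem_Ici.mpr hs) hs
  simp only [Real.log_one] at h0
  norm_num at h0
  rw [one_div]
  linarith

/-- reverse Pinsker-type inequality restricted to the set where the
density ratio is at least 1, for probability measures on a finite set. -/
theorem stmt1 {S : Type*} [Fintype S]
    (α β : S → ℝ) (M : ℝ)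
    (hα : ∀ A, 0 ≤ α A) (hβ : ∀ A, 0 ≤ β A)
    (hαs : ∑ A, α A = 1) (hβs : ∑ A, β A = 1)
    (hM : ∀ A, 0 < β A → α A / β A ≤ M) :
    ∑ A ∈ Finset.univ.filter (fun A => β A ≤ α A), α A * Real.log (α A / β A) ≤
      Real.sqrt M * ((1 / 2) * ∑ A, |α A - β A|) := by
  -- M is nonnegative
  obtain ⟨A0, hA0⟩ : ∃ A, 0 < β A := by
    by_contra h
    push_neg at h
    have : ∑ A, β A = 0 :=
      Finset.sum_eq_zero (fun A _ => le_antisymm (h A) (hβ A))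
    rw [hβs] at this; norm_num at this
  have hM0 : 0 ≤ M := le_trans (div_nonneg (hα A0) (hA0.le)) (hM A0 hA0)
  -- termwise bound
  have h1 : ∑ A ∈ Finset.univ.filter (fun A => β A ≤ α A), α A * Real.log (α A / β A) ≤
      ∑ A ∈ Finset.univ.filter (fun A => β A ≤ α A), Real.sqrt M * (α A - β A) := by
    apply Finset.sum_le_sum
    intro A hA
    rw [Finset.mem_filter] at hA
    have hba : β A ≤ α A := hA.2
    rcases eq_or_lt_of_le (hβ A) with hb0 | hb0
    · rw [← hb0, div_zero, Real.log_zero, mul_zero]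
      exact mul_nonneg (Real.sqrt_nonneg M) (by simpa using hα A)
    · set r : ℝ := α A / β A with hrdef
      have hr1 : 1 ≤ r := (one_le_div hb0).mpr hba
      have hrM : r ≤ M := hM A hb0
      have hsr : 0 < Real.sqrt r := Real.sqrt_pos.mpr (lt_of_lt_of_le one_pos hr1)
      have hsq : Real.sqrt r * Real.sqrt r = r := Real.mul_self_sqrt (by linarith)
      have hlog : Real.log r ≤ Real.sqrt r - 1 / Real.sqrt r := by
        have := two_log_le_aux (Real.sqrt r) (Real.one_le_sqrt.mpr hr1)
        rwa [Real.log_sqrt (by linarith), mul_div_cancel₀ _ (two_ne_zero)] at this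
      have hrb : r * β A = α A := div_mul_cancel₀ _ hb0.ne'
      have heq : α A * (Real.sqrt r - 1 / Real.sqrt r) = Real.sqrt r * (α A - β A) := by
        field_simp
        nlinarith [hsq, hrb]
      have step1 : α A * Real.log r ≤ α A * (Real.sqrt r - 1 / Real.sqrt r) :=
        mul_le_mul_of_nonneg_left hlog (hα A)
      have step2 : Real.sqrt r * (α A - β A) ≤ Real.sqrt M * (α A - β A) :=
        mul_le_mul_of_nonneg_right (Real.sqrt_le_sqrt hrM) (by linarith)
      calc α A * Real.log r ≤ α A * (Real.sqrt r - 1 / Real.sqrt r) := step1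
        _ = Real.sqrt r * (α A - β A) := heq
        _ ≤ Real.sqrt M * (α A - β A) := step2
  -- identify the TV distance
  have h2 : ∑ A ∈ Finset.univ.filter (fun A => β A ≤ α A), (α A - β A) =
      (1 / 2) * ∑ A, |α A - β A| := by
    have hsplit := Finset.sum_filter_add_sum_filter_not Finset.univ
      (fun A => β A ≤ α A) (fun A => |α A - β A|)
    have e1 : ∑ A ∈ Finset.univ.filter (fun A => β A ≤ α A), |α A - β A| =
        ∑ A ∈ Finset.univ.filter (fun A => β A ≤ α A), (α A - β A) := by
      apply Finset.sum_congr rfl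
      intro A hA
      rw [Finset.mem_filter] at hA
      exact abs_of_nonneg (by linarith [hA.2])
    have e2 : ∑ A ∈ Finset.univ.filter (fun A => ¬ β A ≤ α A), |α A - β A| =
        ∑ A ∈ Finset.univ.filter (fun A => ¬ β A ≤ α A), (β A - α A) := by
      apply Finset.sum_congr rfl
      intro A hA
      rw [Finset.mem_filter, not_le] at hA
      rw [abs_of_neg (by linarith [hA.2])]; ring
    have hzero : ∑ A ∈ Finset.univ.filter (fun A => β A ≤ α A), (α A - β A) +
        ∑ A ∈ Finset.univ.filter (fun A => ¬ β A ≤ α A), (α A - β A) = 0 := by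
      rw [Finset.sum_filter_add_sum_filter_not, Finset.sum_sub_distrib, hαs, hβs]
      ring
    have e3 : ∑ A ∈ Finset.univ.filter (fun A => ¬ β A ≤ α A), (β A - α A) =
        - ∑ A ∈ Finset.univ.filter (fun A => ¬ β A ≤ α A), (α A - β A) := by
      rw [← Finset.sum_neg_distrib]
      apply Finset.sum_congr rfl
      intro A _; ring
    rw [e1, e2, e3] at hsplit
    linarith
  rw [← Finset.mul_sum] at h1
  rw [← h2]
  exact h1
end

section
/- Let μ, ν be probability measures on a standard Borel space (Ω, B), with μ ≪ ν, and let (P_n) be a refining sequence of finite measurable partitions whose union generates B. Then D(μ∥ν) = sup_n H_{μ∥ν}(P_n), and the sequence H_{μ∥ν}(P_n) is nondecreasing in n. -/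
open MeasureTheory

/-- Kullback–Leibler divergence: `∫ log (dμ/dν) dμ` if `μ ≪ ν` and the integrand is
integrable, and `+∞` otherwise. -/
noncomputable def klDivergence {Ω : Type*} [MeasurableSpace Ω] (μ ν : Measure Ω) : EReal :=
  open Classical in
  if μ ≪ ν ∧ Integrable (fun x => Real.log (μ.rnDeriv ν x).toReal) μ then
    ((∫ x, Real.log (μ.rnDeriv ν x).toReal ∂μ : ℝ) : EReal)
  else ⊤

/-- Relative entropy of `μ` with respect to `ν` over a finite partition `P`
(with the convention `0 · log 0 = 0`, automatic since `0 * log 0 = 0` in Lean). -/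
noncomputable def relEntPartition {Ω : Type*} [MeasurableSpace Ω]
    (μ ν : Measure Ω) (P : Finset (Set Ω)) : ℝ :=
  ∑ A ∈ P, (μ A).toReal * Real.log ((μ A).toReal / (ν A).toReal)

/-!
Write `f = dμ/dν`. On a finite measurable partition `P`, the function `g_P` equal to `μ A / ν A`
on each cell `A` is a version of `E_ν[f | σ(P)]`, and `H_{μ∥ν}(P) = ∫ g_P log g_P dν`. Jensen's
inequality for the convex function `x log x`, applied cell by cell, gives `H(P) ≤ H(Q)` when `Q`
refines `P`, and `H(P) ≤ ∫ f log f dν = D(μ∥ν)`. Conversely, the σ-algebras `σ(P_n)` increase to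
the whole σ-algebra, so `g_{P_n} → f` ν-a.e. by Lévy's upward theorem, and Fatou's lemma for the
nonnegative functions `g log g + 1` gives `D(μ∥ν) ≤ liminf H(P_n)`. Working with the
`[0, ∞]`-valued integral of `f log f + 1` treats the cases `D < ∞` and `D = ∞` together.
-/

open Filter Set Topology Real MeasurableSpace

section Partitions

variable {Ω : Type*} [mΩ : MeasurableSpace Ω]

structure IsMeasurablePartition (P : Finset (Set Ω)) : Prop where
  measurableSet : ∀ A ∈ P, MeasurableSet A
  pairwiseDisjoint : (P : Set (Set Ω)).PairwiseDisjoint id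
  sUnion_eq_univ : ⋃₀ (P : Set (Set Ω)) = univ

def Refines (Q P : Finset (Set Ω)) : Prop := ∀ A ∈ Q, ∃ B ∈ P, A ⊆ B

namespace IsMeasurablePartition

variable {P Q : Finset (Set Ω)} {A B : Set Ω} {x : Ω}

theorem exists_mem (hP : IsMeasurablePartition P) (x : Ω) : ∃ A ∈ P, x ∈ A :=
  mem_sUnion.1 (hP.sUnion_eq_univ.symm ▸ mem_univ x)

theorem eq_of_mem (hP : IsMeasurablePartition P) (hA : A ∈ P) (hB : B ∈ P) (hxA : x ∈ A)
    (hxB : x ∈ B) : A = B :=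
  hP.pairwiseDisjoint.elim_set hA hB x hxA hxB

theorem biUnion_eq_univ (hP : IsMeasurablePartition P) : ⋃ A ∈ P, A = univ := by
  rw [← hP.sUnion_eq_univ, sUnion_eq_biUnion, Finset.set_biUnion_coe]

theorem isPiSystem (hP : IsMeasurablePartition P) : IsPiSystem (P : Set (Set Ω)) := by
  rintro A hA B hB ⟨x, hxA, hxB⟩
  rwa [hP.eq_of_mem hA hB hxA hxB, inter_self]

theorem generateFrom_le (hP : IsMeasurablePartition P) : generateFrom (P : Set (Set Ω)) ≤ mΩ :=
  MeasurableSpace.generateFrom_le fun A hA => hP.measurableSet A hA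

/-- Every cell of `P` is the union of the cells of the finer partition `Q` that it contains. -/
theorem generateFrom_mono_of_refines (hP : IsMeasurablePartition P)
    (hQ : IsMeasurablePartition Q) (hQP : Refines Q P) :
    generateFrom (P : Set (Set Ω)) ≤ generateFrom (Q : Set (Set Ω)) := by
  classical
  refine MeasurableSpace.generateFrom_le fun B hB => ?_
  have hB_eq : B = ⋃ A ∈ Q.filter (· ⊆ B), A := by
    ext x
    simp only [mem_iUnion, Finset.mem_filter, exists_prop]
    refine ⟨fun hxB => ?_, fun ⟨A, ⟨_, hAB⟩, hxA⟩ => hAB hxA⟩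
    obtain ⟨A, hA, hxA⟩ := hQ.exists_mem x
    obtain ⟨B', hB', hAB'⟩ := hQP A hA
    exact ⟨A, ⟨hA, hP.eq_of_mem hB hB' hxB (hAB' hxA) ▸ hAB'⟩, hxA⟩
  rw [hB_eq]
  exact Finset.measurableSet_biUnion _ fun A hA =>
    measurableSet_generateFrom (Finset.mem_filter.1 hA).1

theorem measure_univ_eq_sum (hP : IsMeasurablePartition P) (ρ : Measure Ω) :
    ρ univ = ∑ A ∈ P, ρ A := by
  rw [← hP.biUnion_eq_univ,
    measure_biUnion_finset (f := fun A => A) hP.pairwiseDisjoint hP.measurableSet]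

theorem integral_eq_sum_setIntegral (hP : IsMeasurablePartition P) {ν : Measure Ω}
    {F : Ω → ℝ} (hF : Integrable F ν) : ∫ x, F x ∂ν = ∑ A ∈ P, ∫ x in A, F x ∂ν := by
  rw [← setIntegral_univ, ← hP.biUnion_eq_univ]
  exact integral_biUnion_finset P hP.measurableSet hP.pairwiseDisjoint fun A _ => hF.integrableOn

variable {ν : Measure Ω} [IsFiniteMeasure ν] {F : Ω → ℝ} {c : Set Ω → ℝ}

theorem integrable_of_forall_eq (hP : IsMeasurablePartition P)
    (hF : ∀ A ∈ P, ∀ x ∈ A, F x = c A) : Integrable F ν := by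
  rw [← integrableOn_univ, ← hP.biUnion_eq_univ, integrableOn_finset_iUnion]
  exact fun A hA => (integrableOn_const (C := c A)).congr_fun (fun x hx => (hF A hA x hx).symm)
    (hP.measurableSet A hA)

theorem integral_eq_sum_of_forall_eq (hP : IsMeasurablePartition P)
    (hF : ∀ A ∈ P, ∀ x ∈ A, F x = c A) : ∫ x, F x ∂ν = ∑ A ∈ P, ν.real A * c A := by
  rw [hP.integral_eq_sum_setIntegral (hP.integrable_of_forall_eq hF)]
  refine Finset.sum_congr rfl fun A hA => ?_
  rw [setIntegral_congr_fun (hP.measurableSet A hA) (hF A hA), setIntegral_const, smul_eq_mul]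

end IsMeasurablePartition

end Partitions

section PartitionDensity

variable {Ω : Type*} [mΩ : MeasurableSpace Ω] {μ ν : Measure Ω} {P : Finset (Set Ω)}

noncomputable def partitionDensity (μ ν : Measure Ω) (P : Finset (Set Ω)) (x : Ω) : ℝ :=
  ∑ A ∈ P, A.indicator (fun _ => μ.real A / ν.real A) x

theorem partitionDensity_eq_of_mem (hP : IsMeasurablePartition P) {A : Set Ω} (hA : A ∈ P)
    {x : Ω} (hx : x ∈ A) : partitionDensity μ ν P x = μ.real A / ν.real A := by
  rw [partitionDensity, Finset.sum_eq_single_of_mem A hA fun B hB hBA =>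
    indicator_of_notMem (fun hxB => hBA (hP.eq_of_mem hB hA hxB hx)) _, indicator_of_mem hx]

theorem partitionDensity_nonneg (x : Ω) : 0 ≤ partitionDensity μ ν P x :=
  Finset.sum_nonneg fun _ _ => indicator_nonneg (fun _ _ => by positivity) x

theorem stronglyMeasurable_partitionDensity :
    StronglyMeasurable[generateFrom (P : Set (Set Ω))] (partitionDensity μ ν P) :=
  Finset.stronglyMeasurable_fun_sum _ fun _ hA =>
    stronglyMeasurable_const.indicator (measurableSet_generateFrom hA)

theorem measurable_partitionDensity (hP : IsMeasurablePartition P) :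
    Measurable (partitionDensity μ ν P) :=
  (stronglyMeasurable_partitionDensity.mono hP.generateFrom_le).measurable

variable [IsFiniteMeasure ν]

theorem integrable_partitionDensity (hP : IsMeasurablePartition P) :
    Integrable (partitionDensity μ ν P) ν :=
  hP.integrable_of_forall_eq fun _ hA _ hx => partitionDensity_eq_of_mem hP hA hx

theorem integrable_mul_log_partitionDensity (hP : IsMeasurablePartition P) :
    Integrable (fun x => partitionDensity μ ν P x * log (partitionDensity μ ν P x)) ν :=
  hP.integrable_of_forall_eq fun _ hA _ hx => by rw [partitionDensity_eq_of_mem hP hA hx]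

theorem setIntegral_partitionDensity_of_mem (hac : μ ≪ ν) (hP : IsMeasurablePartition P)
    {A : Set Ω} (hA : A ∈ P) : ∫ x in A, partitionDensity μ ν P x ∂ν = μ.real A := by
  rw [setIntegral_congr_fun (hP.measurableSet A hA) fun x hx => partitionDensity_eq_of_mem hP hA hx,
    setIntegral_const, smul_eq_mul]
  rcases eq_or_ne (ν A) 0 with hνA | hνA
  · simp [measureReal_def, hνA, hac hνA]
  · exact mul_div_cancel₀ _ ((measureReal_ne_zero_iff (by finiteness)).2 hνA)

theorem integral_mul_log_partitionDensity (hac : μ ≪ ν) (hP : IsMeasurablePartition P) :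
    ∫ x, partitionDensity μ ν P x * log (partitionDensity μ ν P x) ∂ν = relEntPartition μ ν P := by
  rw [hP.integral_eq_sum_of_forall_eq
    (c := fun A => μ.real A / ν.real A * log (μ.real A / ν.real A))
    fun A hA x hx => by rw [partitionDensity_eq_of_mem hP hA hx]]
  refine Finset.sum_congr rfl fun A _ => ?_
  rcases eq_or_ne (ν A) 0 with hνA | hνA
  · simp [measureReal_def, hνA, hac hνA]
  · rw [← mul_assoc, mul_div_cancel₀ _ ((measureReal_ne_zero_iff (by finiteness)).2 hνA)]
    rfl

variable [IsFiniteMeasure μ]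

/-- Agreement on the cells extends to `σ(P)` because the cells form a π-system. -/
theorem withDensity_partitionDensity_apply (hac : μ ≪ ν) (hP : IsMeasurablePartition P)
    {s : Set Ω} (hs : MeasurableSet[generateFrom (P : Set (Set Ω))] s) :
    ν.withDensity (fun x => ENNReal.ofReal (partitionDensity μ ν P x)) s = μ s := by
  have hcell : ∀ A ∈ P, ν.withDensity (fun x => ENNReal.ofReal (partitionDensity μ ν P x)) A
      = μ A := fun A hA => by
    rw [withDensity_apply _ (hP.measurableSet A hA), ← ofReal_integral_eq_lintegral_ofReal
      (integrable_partitionDensity hP).integrableOn (ae_of_all _ partitionDensity_nonneg),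
      setIntegral_partitionDensity_of_mem hac hP hA, ofReal_measureReal]
  have : IsFiniteMeasure (ν.withDensity fun x => ENNReal.ofReal (partitionDensity μ ν P x)) :=
    isFiniteMeasure_withDensity_ofReal (integrable_partitionDensity hP).hasFiniteIntegral
  exact ext_on_measurableSpace_of_generate_finite mΩ (P : Set (Set Ω)) hcell hP.generateFrom_le rfl
    hP.isPiSystem (by rw [hP.measure_univ_eq_sum, hP.measure_univ_eq_sum μ,
      Finset.sum_congr rfl hcell]) hs

theorem setIntegral_partitionDensity (hac : μ ≪ ν) (hP : IsMeasurablePartition P)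
    {s : Set Ω} (hs : MeasurableSet[generateFrom (P : Set (Set Ω))] s) :
    ∫ x in s, partitionDensity μ ν P x ∂ν = μ.real s := by
  rw [integral_eq_lintegral_of_nonneg_ae (ae_of_all _ partitionDensity_nonneg)
    (measurable_partitionDensity hP).aestronglyMeasurable,
    ← withDensity_apply _ (hP.generateFrom_le s hs), withDensity_partitionDensity_apply hac hP hs,
    measureReal_def]

theorem partitionDensity_ae_eq_condExp (hac : μ ≪ ν) (hP : IsMeasurablePartition P) :
    partitionDensity μ ν P =ᵐ[ν]
      ν[fun x => (μ.rnDeriv ν x).toReal | generateFrom (P : Set (Set Ω))] :=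
  ae_eq_condExp_of_forall_setIntegral_eq hP.generateFrom_le Measure.integrable_toReal_rnDeriv
    (fun _ _ _ => (integrable_partitionDensity hP).integrableOn)
    (fun s hs _ => by rw [setIntegral_partitionDensity hac hP hs,
      Measure.setIntegral_toReal_rnDeriv hac])
    stronglyMeasurable_partitionDensity.aestronglyMeasurable

end PartitionDensity

section Jensen

variable {Ω : Type*} [MeasurableSpace Ω] {μ ν : Measure Ω} [IsFiniteMeasure ν]
  {P Q : Finset (Set Ω)} {h : Ω → ℝ}

theorem setIntegral_mul_log_div_le {A : Set Ω} (h0 : ∀ᵐ x ∂ν.restrict A, 0 ≤ h x)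
    (hint : IntegrableOn h A ν) (hφ : IntegrableOn (fun x => h x * log (h x)) A ν) :
    (∫ x in A, h x ∂ν) * log ((∫ x in A, h x ∂ν) / ν.real A)
      ≤ ∫ x in A, h x * log (h x) ∂ν := by
  rcases eq_or_ne (ν A) 0 with hνA | hνA
  · simp [Measure.restrict_eq_zero.2 hνA]
  have hpos : 0 < ν.real A := ENNReal.toReal_pos hνA (measure_ne_top ν A)
  have hJ := convexOn_mul_log.map_set_average_le continuous_mul_log.continuousOn isClosed_Ici
    hνA (measure_ne_top ν A) h0 hint hφ
  rw [setAverage_eq, setAverage_eq, smul_eq_mul, smul_eq_mul, inv_mul_eq_div] at hJ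
  calc (∫ x in A, h x ∂ν) * log ((∫ x in A, h x ∂ν) / ν.real A)
      = ν.real A * ((∫ x in A, h x ∂ν) / ν.real A * log ((∫ x in A, h x ∂ν) / ν.real A)) := by
        field_simp
    _ ≤ ν.real A * ((ν.real A)⁻¹ * ∫ x in A, h x * log (h x) ∂ν) :=
        mul_le_mul_of_nonneg_left hJ hpos.le
    _ = ∫ x in A, h x * log (h x) ∂ν := by field_simp

theorem relEntPartition_le_integral_mul_log (hP : IsMeasurablePartition P)
    (h0 : ∀ᵐ x ∂ν, 0 ≤ h x) (hint : Integrable h ν)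
    (hφ : Integrable (fun x => h x * log (h x)) ν) (hμ : ∀ A ∈ P, ∫ x in A, h x ∂ν = μ.real A) :
    relEntPartition μ ν P ≤ ∫ x, h x * log (h x) ∂ν := by
  rw [hP.integral_eq_sum_setIntegral hφ]
  refine Finset.sum_le_sum fun A hA => ?_
  have := setIntegral_mul_log_div_le (A := A) (ae_restrict_of_ae h0) hint.integrableOn
    hφ.integrableOn
  rwa [hμ A hA] at this

theorem relEntPartition_mono_of_refines [IsFiniteMeasure μ] (hac : μ ≪ ν)
    (hP : IsMeasurablePartition P) (hQ : IsMeasurablePartition Q) (hQP : Refines Q P) :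
    relEntPartition μ ν P ≤ relEntPartition μ ν Q := by
  rw [← integral_mul_log_partitionDensity hac hQ]
  exact relEntPartition_le_integral_mul_log hP (ae_of_all _ partitionDensity_nonneg)
    (integrable_partitionDensity hQ) (integrable_mul_log_partitionDensity hQ)
    fun A hA => setIntegral_partitionDensity hac hQ
      (hP.generateFrom_mono_of_refines hQ hQP _ (measurableSet_generateFrom hA))

end Jensen

theorem Real.mul_log_add_one_nonneg {x : ℝ} (hx : 0 ≤ x) : 0 ≤ x * log x + 1 := by
  linarith [self_sub_one_le_mul_log hx]

theorem EReal.iSup_add_coe {ι : Sort*} (f : ι → EReal) (c : ℝ) :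
    (⨆ i, f i) + c = ⨆ i, (f i + c) :=
  Monotone.map_iSup_of_continuousAt (f := (· + (c : EReal)))
    (EReal.continuousAt_add (.inr (EReal.coe_ne_bot c)) (.inr (EReal.coe_ne_top c)) |>.comp
      (continuousAt_id.prodMk continuousAt_const))
    (fun _ _ h => add_le_add_left h _) (EReal.bot_add _)

theorem EReal.coe_ennreal_iSup {ι : Sort*} [Nonempty ι] (f : ι → ENNReal) :
    ((⨆ i, f i : ENNReal) : EReal) = ⨆ i, (f i : EReal) :=
  Monotone.map_ciSup_of_continuousAt continuous_coe_ennreal_ereal.continuousAt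
    EReal.coe_ennreal_strictMono.monotone

section MulLogLIntegral

variable {Ω : Type*} [MeasurableSpace Ω] {ν : Measure Ω} {h : Ω → ℝ}

/-- For `h ≥ 0` the integrand `h log h + 1 ≥ h` is nonnegative, so this is a value in `[0, ∞]`
even when `h log h` is not integrable; for a probability measure it is `∫ h log h dν + 1`. -/
noncomputable def mulLogLIntegral (ν : Measure Ω) (h : Ω → ℝ) : ENNReal :=
  ∫⁻ x, ENNReal.ofReal (h x * log (h x) + 1) ∂ν

theorem coe_mulLogLIntegral [IsProbabilityMeasure ν] (h0 : ∀ᵐ x ∂ν, 0 ≤ h x)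
    (hint : Integrable (fun x => h x * log (h x)) ν) :
    (mulLogLIntegral ν h : EReal) = ((∫ x, h x * log (h x) ∂ν : ℝ) : EReal) + 1 := by
  have h1 : ∀ᵐ x ∂ν, 0 ≤ h x * log (h x) + 1 := h0.mono fun _ => mul_log_add_one_nonneg
  have hint1 : Integrable (fun x => h x * log (h x) + 1) ν := hint.add (integrable_const 1)
  rw [mulLogLIntegral, ← ofReal_integral_eq_lintegral_ofReal hint1 h1,
    EReal.coe_ennreal_ofReal, max_eq_left (integral_nonneg_of_ae h1),
    integral_add hint (integrable_const 1), integral_const, probReal_univ, one_smul, EReal.coe_add]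
  rfl

theorem mulLogLIntegral_eq_top [IsFiniteMeasure ν] (hh : Measurable h) (h0 : ∀ᵐ x ∂ν, 0 ≤ h x)
    (hint : ¬Integrable (fun x => h x * log (h x)) ν) : mulLogLIntegral ν h = ⊤ := by
  by_contra hne
  refine hint ?_
  have h1 : Integrable (fun x => h x * log (h x) + 1) ν :=
    ⟨((hh.mul (measurable_log.comp hh)).add_const 1).aestronglyMeasurable,
      (hasFiniteIntegral_iff_ofReal (h0.mono fun _ => mul_log_add_one_nonneg)).2
        (lt_top_iff_ne_top.2 hne)⟩
  exact (h1.sub (integrable_const 1)).congr (ae_of_all _ fun x => by simp)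

theorem mulLogLIntegral_le_liminf {g : ℕ → Ω → ℝ} {f : Ω → ℝ} (hg : ∀ n, Measurable (g n))
    (hlim : ∀ᵐ x ∂ν, Tendsto (fun n => g n x) atTop (𝓝 (f x))) :
    mulLogLIntegral ν f ≤ liminf (fun n => mulLogLIntegral ν (g n)) atTop := by
  have hG : Continuous fun y : ℝ => ENNReal.ofReal (y * log y + 1) :=
    ENNReal.continuous_ofReal.comp (continuous_mul_log.add continuous_const)
  calc mulLogLIntegral ν f
      = ∫⁻ x, liminf (fun n => ENNReal.ofReal (g n x * log (g n x) + 1)) atTop ∂ν :=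
        lintegral_congr_ae (hlim.mono fun _ hx => ((hG.tendsto _).comp hx).liminf_eq.symm)
    _ ≤ _ := lintegral_liminf_le fun n => hG.measurable.comp (hg n)

end MulLogLIntegral

section Divergence

variable {Ω : Type*} [MeasurableSpace Ω] {μ ν : Measure Ω} [IsProbabilityMeasure ν]
  {P : Finset (Set Ω)}

theorem coe_mulLogLIntegral_partitionDensity (hac : μ ≪ ν) (hP : IsMeasurablePartition P) :
    (mulLogLIntegral ν (partitionDensity μ ν P) : EReal) = (relEntPartition μ ν P : EReal) + 1 := by
  rw [coe_mulLogLIntegral (ae_of_all _ partitionDensity_nonneg)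
    (integrable_mul_log_partitionDensity hP), integral_mul_log_partitionDensity hac hP]

variable [IsFiniteMeasure μ]

theorem klDivergence_add_one (hac : μ ≪ ν) :
    klDivergence μ ν + 1 = mulLogLIntegral ν fun x => (μ.rnDeriv ν x).toReal := by
  have h0 : ∀ᵐ x ∂ν, 0 ≤ (μ.rnDeriv ν x).toReal := ae_of_all _ fun _ => ENNReal.toReal_nonneg
  by_cases hint : Integrable (fun x => log (μ.rnDeriv ν x).toReal) μ
  · rw [klDivergence, if_pos ⟨hac, hint⟩, ← integral_rnDeriv_smul hac,
      coe_mulLogLIntegral h0 ((integrable_rnDeriv_smul_iff hac).2 hint)]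
    rfl
  · rw [klDivergence, if_neg fun h => hint h.2, mulLogLIntegral_eq_top
      (μ.measurable_rnDeriv ν).ennreal_toReal h0
      fun h => hint ((integrable_rnDeriv_smul_iff hac).1 h)]
    rfl

theorem mulLogLIntegral_partitionDensity_le (hac : μ ≪ ν) (hP : IsMeasurablePartition P) :
    mulLogLIntegral ν (partitionDensity μ ν P)
      ≤ mulLogLIntegral ν fun x => (μ.rnDeriv ν x).toReal := by
  have h0 : ∀ᵐ x ∂ν, 0 ≤ (μ.rnDeriv ν x).toReal := ae_of_all _ fun _ => ENNReal.toReal_nonneg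
  by_cases hφ : Integrable (fun x => (μ.rnDeriv ν x).toReal * log (μ.rnDeriv ν x).toReal) ν
  · rw [← EReal.coe_ennreal_le_coe_ennreal_iff, coe_mulLogLIntegral_partitionDensity hac hP,
      coe_mulLogLIntegral h0 hφ]
    gcongr
    exact relEntPartition_le_integral_mul_log hP h0 Measure.integrable_toReal_rnDeriv hφ
      fun A _ => Measure.setIntegral_toReal_rnDeriv hac A
  · rw [mulLogLIntegral_eq_top (μ.measurable_rnDeriv ν).ennreal_toReal h0 hφ]
    exact le_top

theorem mulLogLIntegral_rnDeriv_eq_iSup (hac : μ ≪ ν) {P : ℕ → Finset (Set Ω)}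
    (hP : ∀ n, IsMeasurablePartition (P n))
    (hlim : ∀ᵐ x ∂ν, Tendsto (fun n => partitionDensity μ ν (P n) x) atTop
      (𝓝 (μ.rnDeriv ν x).toReal)) :
    mulLogLIntegral ν (fun x => (μ.rnDeriv ν x).toReal)
      = ⨆ n, mulLogLIntegral ν (partitionDensity μ ν (P n)) :=
  le_antisymm
    ((mulLogLIntegral_le_liminf (fun n => measurable_partitionDensity (hP n)) hlim).trans
      (le_trans liminf_le_limsup limsup_le_iSup))
    (iSup_le fun n => mulLogLIntegral_partitionDensity_le hac (hP n))

end Divergence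

section Martingale

variable {Ω : Type*} [mΩ : MeasurableSpace Ω] {P : ℕ → Finset (Set Ω)}

def refiningFiltration (hP : ∀ n, IsMeasurablePartition (P n))
    (hrefine : ∀ n, Refines (P (n + 1)) (P n)) : Filtration ℕ mΩ where
  seq n := generateFrom (P n : Set (Set Ω))
  mono' := monotone_nat_of_le_succ fun n =>
    (hP n).generateFrom_mono_of_refines (hP (n + 1)) (hrefine n)
  le' n := (hP n).generateFrom_le

theorem iSup_refiningFiltration (hP : ∀ n, IsMeasurablePartition (P n))
    (hrefine : ∀ n, Refines (P (n + 1)) (P n))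
    (hgen : generateFrom {A : Set Ω | ∃ n, A ∈ P n} = mΩ) :
    ⨆ n, refiningFiltration hP hrefine n = mΩ := by
  refine (iSup_generateFrom _).trans (Eq.trans (congrArg generateFrom ?_) hgen)
  ext A
  simp

/-- Lévy's upward theorem for the martingale `n ↦ E_ν[dμ/dν | σ(P n)]`. -/
theorem tendsto_partitionDensity_rnDeriv {μ ν : Measure Ω} [IsFiniteMeasure μ] [IsFiniteMeasure ν]
    (hac : μ ≪ ν) (hP : ∀ n, IsMeasurablePartition (P n))
    (hrefine : ∀ n, Refines (P (n + 1)) (P n))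
    (hgen : generateFrom {A : Set Ω | ∃ n, A ∈ P n} = mΩ) :
    ∀ᵐ x ∂ν, Tendsto (fun n => partitionDensity μ ν (P n) x) atTop (𝓝 (μ.rnDeriv ν x).toReal) := by
  have hf : StronglyMeasurable[⨆ n, refiningFiltration hP hrefine n]
      fun x => (μ.rnDeriv ν x).toReal := by
    rw [iSup_refiningFiltration hP hrefine hgen]
    exact (μ.measurable_rnDeriv ν).ennreal_toReal.stronglyMeasurable
  filter_upwards [Measure.integrable_toReal_rnDeriv.tendsto_ae_condExp hf,
    ae_all_iff.2 fun n => partitionDensity_ae_eq_condExp hac (hP n)] with x hx hdens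
  exact hx.congr fun n => (hdens n).symm

end Martingale

theorem stmt4_general {Ω : Type*} [mΩ : MeasurableSpace Ω]
    (μ ν : Measure Ω) [IsProbabilityMeasure μ] [IsProbabilityMeasure ν]
    (hac : μ ≪ ν)
    (P : ℕ → Finset (Set Ω))
    (hmeas : ∀ n, ∀ A ∈ P n, MeasurableSet A)
    (hdisj : ∀ n, ((P n : Set (Set Ω))).PairwiseDisjoint id)
    (hcover : ∀ n, ⋃₀ (P n : Set (Set Ω)) = Set.univ)
    (hrefine : ∀ n, ∀ A ∈ P (n + 1), ∃ B ∈ P n, A ⊆ B)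
    (hgen : MeasurableSpace.generateFrom {A : Set Ω | ∃ n, A ∈ P n} = mΩ) :
    (klDivergence μ ν = ⨆ n : ℕ, ((relEntPartition μ ν (P n) : ℝ) : EReal)) ∧
      Monotone (fun n => relEntPartition μ ν (P n)) := by
  have hP n : IsMeasurablePartition (P n) := ⟨hmeas n, hdisj n, hcover n⟩
  refine ⟨?_, monotone_nat_of_le_succ fun n =>
    relEntPartition_mono_of_refines hac (hP n) (hP (n + 1)) (hrefine n)⟩
  have hlim := tendsto_partitionDensity_rnDeriv hac hP hrefine hgen
  refine (EReal.addLECancellable_coe 1).inj_left.1 ?_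
  calc klDivergence μ ν + 1
      = mulLogLIntegral ν fun x => (μ.rnDeriv ν x).toReal := klDivergence_add_one hac
    _ = ⨆ n, (mulLogLIntegral ν (partitionDensity μ ν (P n)) : EReal) := by
        rw [mulLogLIntegral_rnDeriv_eq_iSup hac hP hlim, EReal.coe_ennreal_iSup]
    _ = ⨆ n, ((relEntPartition μ ν (P n) : EReal) + 1) :=
        iSup_congr fun n => coe_mulLogLIntegral_partitionDensity hac (hP n)
    _ = (⨆ n, (relEntPartition μ ν (P n) : EReal)) + 1 := (EReal.iSup_add_coe _ 1).symm

/-- on a standard Borel space, for `μ ≪ ν` and a refining sequence of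
finite measurable partitions whose union generates the σ-algebra, the KL divergence
equals the supremum of the relative entropies over the partitions, and these relative
entropies are nondecreasing. -/
theorem stmt4 {Ω : Type*} [mΩ : MeasurableSpace Ω] [StandardBorelSpace Ω]
    (μ ν : Measure Ω) [IsProbabilityMeasure μ] [IsProbabilityMeasure ν]
    (hac : μ ≪ ν)
    (P : ℕ → Finset (Set Ω))
    (hmeas : ∀ n, ∀ A ∈ P n, MeasurableSet A)
    (hdisj : ∀ n, ((P n : Set (Set Ω))).PairwiseDisjoint id)
    (hcover : ∀ n, ⋃₀ (P n : Set (Set Ω)) = Set.univ)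
    (hrefine : ∀ n, ∀ A ∈ P (n + 1), ∃ B ∈ P n, A ⊆ B)
    (hgen : MeasurableSpace.generateFrom {A : Set Ω | ∃ n, A ∈ P n} = mΩ) :
    (klDivergence μ ν = ⨆ n : ℕ, ((relEntPartition μ ν (P n) : ℝ) : EReal)) ∧
      Monotone (fun n => relEntPartition μ ν (P n)) :=
  stmt4_general (mΩ := mΩ) μ ν hac P hmeas hdisj hcover hrefine hgen
end

section
/- The matrices A = [[1,2],[0,1]] and B = [[1,0],[2,1]] generate a free subgroup of rank 2 in SL(2,ℤ). -/
/-- The Sanov matrix `A = [[1,2],[0,1]]` as an element of `SL(2,ℤ)`. -/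
noncomputable def sanovA : Matrix.SpecialLinearGroup (Fin 2) ℤ :=
  ⟨!![1, 2; 0, 1], by norm_num [Matrix.det_fin_two_of]⟩

/-- The Sanov matrix `B = [[1,0],[2,1]]` as an element of `SL(2,ℤ)`. -/
noncomputable def sanovB : Matrix.SpecialLinearGroup (Fin 2) ℤ :=
  ⟨!![1, 0; 2, 1], by norm_num [Matrix.det_fin_two_of]⟩

namespace SanovPingPong

abbrev SL2Z := Matrix.SpecialLinearGroup (Fin 2) ℤ

/-- nonzero integer vectors -/
def V : Type := {v : Fin 2 → ℤ // v ≠ 0}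

lemma smul_ne_zero' (g : SL2Z) (v : Fin 2 → ℤ) (hv : v ≠ 0) :
    (g : Matrix (Fin 2) (Fin 2) ℤ).mulVec v ≠ 0 := by
  intro h
  apply hv
  have := congrArg ((g⁻¹ : SL2Z) : Matrix (Fin 2) (Fin 2) ℤ).mulVec h
  rwa [Matrix.mulVec_mulVec, ← Matrix.SpecialLinearGroup.coe_mul, inv_mul_cancel,
    Matrix.SpecialLinearGroup.coe_one, Matrix.one_mulVec, Matrix.mulVec_zero] at this

instance : SMul SL2Z V :=
  ⟨fun g v => ⟨(g : Matrix (Fin 2) (Fin 2) ℤ).mulVec v.1, smul_ne_zero' g v.1 v.2⟩⟩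

lemma smul_def (g : SL2Z) (v : V) :
    (g • v).1 = (g : Matrix (Fin 2) (Fin 2) ℤ).mulVec v.1 := rfl

instance : MulAction SL2Z V where
  one_smul v := by
    apply Subtype.ext
    rw [smul_def, Matrix.SpecialLinearGroup.coe_one, Matrix.one_mulVec]
  mul_smul g h v := by
    apply Subtype.ext
    rw [smul_def, smul_def, smul_def, Matrix.SpecialLinearGroup.coe_mul,
      Matrix.mulVec_mulVec]

lemma sanovA_smul (v : V) :
    (sanovA • v).1 = ![v.1 0 + 2 * v.1 1, v.1 1] := by
  rw [smul_def]
  funext i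
  fin_cases i <;>
    · simp [sanovA, Matrix.mulVec, dotProduct, Fin.sum_univ_two]
      try ring

lemma sanovA_inv_smul (v : V) :
    (sanovA⁻¹ • v).1 = ![v.1 0 - 2 * v.1 1, v.1 1] := by
  rw [smul_def]
  have : ((sanovA⁻¹ : SL2Z) : Matrix (Fin 2) (Fin 2) ℤ) = !![1, -2; 0, 1] := by
    rw [Matrix.SpecialLinearGroup.coe_inv]
    simp [sanovA, Matrix.adjugate_fin_two]
  rw [this]
  funext i
  fin_cases i <;>
    · simp [Matrix.mulVec, dotProduct, Fin.sum_univ_two]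
      try ring

lemma sanovB_smul (v : V) :
    (sanovB • v).1 = ![v.1 0, 2 * v.1 0 + v.1 1] := by
  rw [smul_def]
  funext i
  fin_cases i <;>
    · simp [sanovB, Matrix.mulVec, dotProduct, Fin.sum_univ_two]
      try ring

lemma sanovB_inv_smul (v : V) :
    (sanovB⁻¹ • v).1 = ![v.1 0, v.1 1 - 2 * v.1 0] := by
  rw [smul_def]
  have : ((sanovB⁻¹ : SL2Z) : Matrix (Fin 2) (Fin 2) ℤ) = !![1, 0; -2, 1] := by
    rw [Matrix.SpecialLinearGroup.coe_inv]
    simp [sanovB, Matrix.adjugate_fin_two]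
  rw [this]
  funext i
  fin_cases i <;>
    · simp [Matrix.mulVec, dotProduct, Fin.sum_univ_two]
      try ring

/-- Ping-pong sets: `XA` is the attracting set of `A`, etc. -/
def XA : Set V := {v | (v.1 0 * v.1 1 > 0 ∧ (v.1 1)^2 ≤ (v.1 0)^2) ∨ v.1 1 = 0}
def YA : Set V := {v | v.1 0 * v.1 1 < 0 ∧ (v.1 1)^2 < (v.1 0)^2}
def XB : Set V := {v | (v.1 0 * v.1 1 > 0 ∧ (v.1 0)^2 < (v.1 1)^2) ∨ v.1 0 = 0}
def YB : Set V := {v | v.1 0 * v.1 1 < 0 ∧ (v.1 0)^2 ≤ (v.1 1)^2}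

def Xs : Bool → Set V := fun b => if b then XA else XB
def Ys : Bool → Set V := fun b => if b then YA else YB

lemma not_both_zero (v : V) : ¬(v.1 0 = 0 ∧ v.1 1 = 0) := by
  rintro ⟨h0, h1⟩
  exact v.2 (funext fun i => by fin_cases i <;> assumption)

/-! Arithmetic core lemmas. -/

lemma keyXA (x y : ℤ) (h : ¬(x * y < 0 ∧ y^2 < x^2)) :
    ((x + 2*y) * y > 0 ∧ y^2 ≤ (x + 2*y)^2) ∨ y = 0 := by
  by_cases hy : y = 0
  · exact Or.inr hy
  left
  have hy2 : 0 < y^2 := by positivity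
  push_neg at h
  rcases lt_or_ge (x * y) 0 with hxy | hxy
  · have hx2 := h hxy
    constructor <;> nlinarith [sq_nonneg (x + y)]
  · constructor <;> nlinarith [sq_nonneg x]

lemma keyYA (x y : ℤ) (h : ¬((x * y > 0 ∧ y^2 ≤ x^2) ∨ y = 0)) :
    (x - 2*y) * y < 0 ∧ y^2 < (x - 2*y)^2 := by
  push_neg at h
  obtain ⟨h1, hy⟩ := h
  have hy2 : 0 < y^2 := by positivity
  rcases le_or_gt (x * y) 0 with hxy | hxy
  · constructor <;> nlinarith
  · have hx2 := h1 hxy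
    constructor <;> nlinarith [sq_nonneg (x - y)]

lemma keyXB (x y : ℤ) (h : ¬(x * y < 0 ∧ x^2 ≤ y^2)) :
    (x * (2*x + y) > 0 ∧ x^2 < (2*x + y)^2) ∨ x = 0 := by
  by_cases hx : x = 0
  · exact Or.inr hx
  left
  have hx2 : 0 < x^2 := by positivity
  push_neg at h
  rcases lt_or_ge (x * y) 0 with hxy | hxy
  · have hy2 := h hxy
    constructor <;> nlinarith [sq_nonneg (x + y)]
  · constructor <;> nlinarith [sq_nonneg y]

lemma keyYB (x y : ℤ) (h : ¬((x * y > 0 ∧ x^2 < y^2) ∨ x = 0)) :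
    x * (y - 2*x) < 0 ∧ x^2 ≤ (y - 2*x)^2 := by
  push_neg at h
  obtain ⟨h1, hx⟩ := h
  have hx2 : 0 < x^2 := by positivity
  rcases le_or_gt (x * y) 0 with hxy | hxy
  · constructor <;> nlinarith
  · have hy2 := h1 hxy
    constructor <;> nlinarith [sq_nonneg (x - y)]

end SanovPingPong

open SanovPingPong in
/-- the matrices `A` and `B` generate a free subgroup of rank 2 of
`SL(2,ℤ)`: the homomorphism from the free group on two generators sending the
generators to `A` and `B` is injective. -/
theorem stmt13 :
    Function.Injective
      ⇑(FreeGroup.lift (fun b : Bool => if b then sanovA else sanovB)) := by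
  apply FreeGroup.injective_lift_of_ping_pong (a := fun b : Bool => if b then sanovA else sanovB)
    (X := Xs) (Y := Ys)
  · -- nonempty
    intro i
    cases i
    · exact ⟨⟨![0, 1], by intro h; simpa using congrFun h 1⟩, Or.inr rfl⟩
    · exact ⟨⟨![1, 0], by intro h; simpa using congrFun h 0⟩, Or.inr rfl⟩
  · -- X pairwise disjoint
    have key : Disjoint XA XB := by
      rw [Set.disjoint_left]
      rintro v hvA hvB
      simp only [XA, XB, Set.mem_setOf_eq] at hvA hvB
      rcases hvA with ⟨h1, h2⟩ | h0 <;> rcases hvB with ⟨h3, h4⟩ | h0'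
      · nlinarith
      · simp [h0'] at h1
      · simp [h0] at h3
      · exact not_both_zero v ⟨h0', h0⟩
    intro i j hij
    cases i <;> cases j
    · exact absurd rfl hij
    · exact (show Disjoint XB XA from key.symm)
    · exact (show Disjoint XA XB from key)
    · exact absurd rfl hij
  · -- Y pairwise disjoint
    have key : Disjoint YA YB := by
      rw [Set.disjoint_left]
      rintro v hvA hvB
      simp only [YA, YB, Set.mem_setOf_eq] at hvA hvB
      nlinarith [hvA.1, hvA.2, hvB.1, hvB.2]
    intro i j hij
    cases i <;> cases j
    · exact absurd rfl hij
    · exact (show Disjoint YB YA from key.symm)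
    · exact (show Disjoint YA YB from key)
    · exact absurd rfl hij
  · -- X i disjoint Y j
    intro i j
    rw [Set.disjoint_left]
    rintro v hvX hvY
    cases i <;> cases j <;>
      simp only [Xs, Ys, if_true, if_false, XA, XB, YA, YB, Set.mem_setOf_eq] at hvX hvY
    · rcases hvX with ⟨h1, h2⟩ | h0
      · nlinarith [hvY.1, hvY.2]
      · exact absurd hvY.1 (by rw [h0]; simp)
    · rcases hvX with ⟨h1, h2⟩ | h0
      · nlinarith [hvY.1, hvY.2]
      · exact absurd hvY.1 (by rw [h0]; simp)
    · rcases hvX with ⟨h1, h2⟩ | h0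
      · nlinarith [hvY.1, hvY.2]
      · exact absurd hvY.1 (by rw [h0]; simp)
    · rcases hvX with ⟨h1, h2⟩ | h0
      · nlinarith [hvY.1, hvY.2]
      · exact absurd hvY.1 (by rw [h0]; simp)
  · -- hX : a i • (Y i)ᶜ ⊆ X i
    intro i
    rintro _ ⟨v, hv, rfl⟩
    cases i
    · -- B
      simp only [Set.mem_compl_iff, Ys, if_false, YB, Set.mem_setOf_eq] at hv
      show sanovB • v ∈ XB
      have hx : (sanovB • v).1 0 = v.1 0 := by rw [sanovB_smul]; simp
      have hy : (sanovB • v).1 1 = 2 * v.1 0 + v.1 1 := by rw [sanovB_smul]; simp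
      simp only [XB, Set.mem_setOf_eq, hx, hy]
      exact keyXB (v.1 0) (v.1 1) hv
    · -- A
      simp only [Set.mem_compl_iff, Ys, if_true, YA, Set.mem_setOf_eq] at hv
      show sanovA • v ∈ XA
      have hx : (sanovA • v).1 0 = v.1 0 + 2 * v.1 1 := by rw [sanovA_smul]; simp
      have hy : (sanovA • v).1 1 = v.1 1 := by rw [sanovA_smul]; simp
      simp only [XA, Set.mem_setOf_eq, hx, hy]
      exact keyXA (v.1 0) (v.1 1) hv
  · -- hY : a⁻¹ i • (X i)ᶜ ⊆ Y i
    intro i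
    rintro _ ⟨v, hv, rfl⟩
    cases i
    · -- B⁻¹
      simp only [Set.mem_compl_iff, Xs, if_false, XB, Set.mem_setOf_eq] at hv
      show sanovB⁻¹ • v ∈ YB
      have hx : (sanovB⁻¹ • v).1 0 = v.1 0 := by rw [sanovB_inv_smul]; simp
      have hy : (sanovB⁻¹ • v).1 1 = v.1 1 - 2 * v.1 0 := by rw [sanovB_inv_smul]; simp
      simp only [YB, Set.mem_setOf_eq, hx, hy]
      exact keyYB (v.1 0) (v.1 1) hv
    · -- A⁻¹
      simp only [Set.mem_compl_iff, Xs, if_true, XA, Set.mem_setOf_eq] at hv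
      show sanovA⁻¹ • v ∈ YA
      have hx : (sanovA⁻¹ • v).1 0 = v.1 0 - 2 * v.1 1 := by rw [sanovA_inv_smul]; simp
      have hy : (sanovA⁻¹ • v).1 1 = v.1 1 := by rw [sanovA_inv_smul]; simp
      simp only [YA, Set.mem_setOf_eq, hx, hy]
      exact keyYA (v.1 0) (v.1 1) hv
end
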